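/- Let X be an S-open subset of a product ∏_{t∈T} X_t of topological spaces, let T' be a topology on X such that (X,T') is locally projectively symmetric, let (Y,d) be a metric space, and let f : (X,T') → Y be strongly separately continuous at the point a = (a_t)_{t∈T} ∈ X. Then f is continuous at a (with respect to T') if and only if for every ε > 0 there exist a finite set T_0 ⊆ T and a T'-neighborhood U of a such that d(f(a), f(x_{T_0}^a)) < ε for all x ∈ U, where x_{T_0}^a denotes the point whose t-th coordinate is a_t for t ∈ T_0 and x_t for t ∉ T_0. -/

import Mathlib

open Function Filter Topology

/-- `Sigma1 x` (σ₁(x)): the set of points differing from `x` in at most one coordinate. -/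
def Sigma1 {T : Type*} {X : T → Type*} (x : ∀ t, X t) : Set (∀ t, X t) :=
  {y | {t | y t ≠ x t}.Subsingleton}

/-- A set `A` is `S`-open if `σ₁(x) ⊆ A` for every `x ∈ A`. -/
def SOpen {T : Type*} {X : T → Type*} (A : Set (∀ t, X t)) : Prop :=
  ∀ x ∈ A, Sigma1 x ⊆ A

theorem update_mem {T : Type*} [DecidableEq T] {X : T → Type*} {A : Set (∀ t, X t)}
    (hA : SOpen A) {x : ∀ t, X t} (hx : x ∈ A) (t : T) (v : X t) :
    Function.update x t v ∈ A := by
  apply hA x hx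
  intro s hs s' hs'
  simp only [Set.mem_setOf_eq] at hs hs'
  have h1 : s = t := by
    by_contra h
    exact hs (Function.update_of_ne h v x)
  have h2 : s' = t := by
    by_contra h
    exact hs' (Function.update_of_ne h v x)
  rw [h1, h2]

/-- The point `x_t^v`: `x` with its `t`-th coordinate replaced by `v`, as an element
of the `S`-open set `A`. -/
def updPt {T : Type*} [DecidableEq T] {X : T → Type*} {A : Set (∀ t, X t)}
    (hA : SOpen A) (x : ↥A) (t : T) (v : X t) : ↥A :=
  ⟨Function.update x.1 t v, update_mem hA x.2 t v⟩

/-- `f : (A, T') → Y` is strongly separately continuous at `a` (w.r.t. every variable):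
for each `t`, `lim_{x → a} dist (f x) (f (x_t^a)) = 0`, the limit taken in `T'`. -/
def StrSepContAt {T : Type*} [DecidableEq T] {X : T → Type*} {A : Set (∀ t, X t)}
    (hA : SOpen A) (T' : TopologicalSpace ↥A) {Y : Type*} [MetricSpace Y]
    (f : ↥A → Y) (a : ↥A) : Prop :=
  ∀ t : T, Filter.Tendsto (fun x : ↥A => dist (f x) (f (updPt hA x t (a.1 t))))
    (@nhds _ T' a) (nhds 0)

/-- `B ⊆ A` is projectively symmetric with respect to `a`: `x_t^a ∈ B` for all `x ∈ B`, `t`. -/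
def ProjSym {T : Type*} [DecidableEq T] {X : T → Type*} {A : Set (∀ t, X t)}
    (hA : SOpen A) (B : Set ↥A) (a : ↥A) : Prop :=
  ∀ x ∈ B, ∀ t : T, updPt hA x t (a.1 t) ∈ B

/-- A topology `T'` on `A` is locally projectively symmetric: every point has a
neighborhood base of sets projectively symmetric with respect to it. -/
def LocProjSym {T : Type*} [DecidableEq T] {X : T → Type*} {A : Set (∀ t, X t)}
    (hA : SOpen A) (T' : TopologicalSpace ↥A) : Prop :=
  ∀ x : ↥A, ∀ U ∈ @nhds _ T' x, ∃ V ∈ @nhds _ T' x, V ⊆ U ∧ ProjSym hA V x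

/-- The point `x_{T0}^a`: coordinates in `T0` taken from `a`, the rest from `x`. -/
def updFin {T : Type*} [DecidableEq T] {X : T → Type*} (x a : ∀ t, X t)
    (T0 : Finset T) : ∀ t, X t :=
  fun s => if s ∈ T0 then a s else x s

theorem updFin_mem {T : Type*} [DecidableEq T] {X : T → Type*} {A : Set (∀ t, X t)}
    (hA : SOpen A) {x : ∀ t, X t} (hx : x ∈ A) (a : ∀ t, X t) (T0 : Finset T) :
    updFin x a T0 ∈ A := by
  induction T0 using Finset.induction_on with
  | empty =>
      have h : updFin x a ∅ = x := by
        funext s; simp [updFin]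
      rwa [h]
  | @insert t T0 ht ih =>
      have h : updFin x a (insert t T0) = Function.update (updFin x a T0) t (a t) := by
        funext s
        by_cases hs : s = t
        · subst hs; simp [updFin]
        · simp [updFin, Function.update_of_ne hs, hs]
      rw [h]
      exact update_mem hA ih t (a t)

/-! Local projective symmetry makes `x ↦ x_S^a` map `𝓝 a` into `𝓝 a` for every finite `S`, so the
one-variable limits `d(f y, f y_t^a) → 0`, applied at `y = x_S^a` and chained by the triangle
inequality along `x, x_S^a, x_{S ∪ {t}}^a`, give `d(f x, f x_S^a) → 0`. Hence `f x` is close to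
`f a` near `a` exactly when `f x_{T₀}^a` is, for a suitable finite `T₀`. -/

section FiniteUpdate

variable {T : Type*} [DecidableEq T] {X : T → Type*} {A : Set (∀ t, X t)} (hA : SOpen A)

def updFinPt (x a : ↥A) (S : Finset T) : ↥A :=
  ⟨updFin x.1 a.1 S, updFin_mem hA x.2 a.1 S⟩

@[simp]
theorem updFinPt_empty (x a : ↥A) : updFinPt hA x a ∅ = x :=
  Subtype.ext <| funext fun s => by simp [updFinPt, updFin]

theorem updFinPt_insert (x a : ↥A) (t : T) (S : Finset T) :
    updFinPt hA x a (insert t S) = updPt hA (updFinPt hA x a S) t (a.1 t) := by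
  refine Subtype.ext <| funext fun s => ?_
  by_cases hs : s = t
  · subst hs
    simp [updFinPt, updPt, updFin]
  · simp [updFinPt, updPt, updFin, hs]

theorem ProjSym.updFinPt_mem {V : Set ↥A} {a x : ↥A} (hV : ProjSym hA V a) (hx : x ∈ V)
    (S : Finset T) : updFinPt hA x a S ∈ V := by
  induction S using Finset.induction_on with
  | empty => simpa using hx
  | insert t S _ ih =>
    rw [updFinPt_insert]
    exact hV _ ih t

variable [τ : TopologicalSpace ↥A]

theorem tendsto_updFinPt_nhds (hsym : LocProjSym hA τ) (a : ↥A) (S : Finset T) :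
    Tendsto (fun x => updFinPt hA x a S) (𝓝 a) (𝓝 a) := by
  intro U hU
  obtain ⟨V, hV, hVU, hVsym⟩ := hsym a U hU
  exact mem_map.2 <| mem_of_superset hV fun x hx => hVU (hVsym.updFinPt_mem hA hx S)

theorem tendsto_dist_updFinPt {Y : Type*} [MetricSpace Y] (hsym : LocProjSym hA τ)
    {f : ↥A → Y} {a : ↥A} (hf : StrSepContAt hA τ f a) (S : Finset T) :
    Tendsto (fun x => dist (f x) (f (updFinPt hA x a S))) (𝓝 a) (𝓝 0) := by
  induction S using Finset.induction_on with
  | empty => simp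
  | insert t S _ ih =>
    have hstep := (hf t).comp (tendsto_updFinPt_nhds hA hsym a S)
    refine squeeze_zero (fun _ => dist_nonneg) (fun x => ?_) (by simpa using ih.add hstep)
    rw [updFinPt_insert]
    exact dist_triangle _ _ _

end FiniteUpdate

theorem continuousAt_iff_finite_approx_general {T : Type*} [DecidableEq T] {X : T → Type*}
    {A : Set (∀ t, X t)} (hA : SOpen A)
    (T' : TopologicalSpace ↥A) (hsym : LocProjSym hA T') {Y : Type*} [MetricSpace Y]
    (f : ↥A → Y) (a : ↥A) (hf : StrSepContAt hA T' f a) :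
    @ContinuousAt _ _ T' _ f a ↔
      ∀ ε > (0 : ℝ), ∃ T0 : Finset T, ∃ U ∈ @nhds _ T' a, ∀ x ∈ U,
        dist (f a) (f ⟨updFin (x : ↥A).1 a.1 T0, updFin_mem hA (x : ↥A).2 a.1 T0⟩) < ε := by
  let _ := T'
  constructor
  · intro hc ε hε
    refine ⟨∅, _, hc (Metric.ball_mem_nhds (f a) hε), fun x hx => ?_⟩
    change dist (f a) (f (updFinPt hA x a ∅)) < ε
    rw [updFinPt_empty, dist_comm]
    exact hx
  · intro h
    refine Metric.tendsto_nhds.2 fun ε hε => ?_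
    obtain ⟨T0, U, hU, hUa⟩ := h (ε / 2) (half_pos hε)
    filter_upwards [hU, (tendsto_dist_updFinPt hA hsym hf T0).eventually
      (gt_mem_nhds (half_pos hε))] with x hxU hx
    have hxa : dist (f (updFinPt hA x a T0)) (f a) < ε / 2 := dist_comm (f a) _ ▸ hUa x hxU
    calc dist (f x) (f a)
        ≤ dist (f x) (f (updFinPt hA x a T0)) + dist (f (updFinPt hA x a T0)) (f a) :=
          dist_triangle _ _ _
      _ < ε := by linarith

/-- Criterion for continuity of a strongly separately continuous map at a point of a
locally projectively symmetric space. -/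
theorem continuousAt_iff_finite_approx {T : Type*} [DecidableEq T] {X : T → Type*}
    [∀ t, TopologicalSpace (X t)] {A : Set (∀ t, X t)} (hA : SOpen A)
    (T' : TopologicalSpace ↥A) (hsym : LocProjSym hA T') {Y : Type*} [MetricSpace Y]
    (f : ↥A → Y) (a : ↥A) (hf : StrSepContAt hA T' f a) :
    @ContinuousAt _ _ T' _ f a ↔
      ∀ ε > (0 : ℝ), ∃ T0 : Finset T, ∃ U ∈ @nhds _ T' a, ∀ x ∈ U,
        dist (f a) (f ⟨updFin (x : ↥A).1 a.1 T0, updFin_mem hA (x : ↥A).2 a.1 T0⟩) < ε :=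
  continuousAt_iff_finite_approx_general hA T' hsym f a hf
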